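/- Let C_n = k[X₁,…,X_{n-1}]/(X₁,…,X_{n-1})², the n-dimensional local algebra with square-zero maximal ideal. Any two Z₂-gradings B = B₀ ⊕ B₁ on C_n with dim B₀ = i are isomorphic as superalgebras; that is, there is a graded algebra isomorphism between them. In particular, there are exactly n isomorphism classes of superalgebra structures on C_n, one for each value i = 1, …, n of dim B₀. -/

import Mathlib

/-!
Write `A = k·1 ⊕ V`. An odd element `x = a + v` satisfies `2a·x = x² + a² ∈ B₀ ∩ B₁ = 0`, so,
as `2` is invertible, `B₁ ⊆ V`; hence `V = (B₀ ∩ V) ⊕ B₁` and `B₀ = k·1 ⊕ (B₀ ∩ V)`. Because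
`V² = 0`, every linear automorphism of `V`, extended by `1 ↦ 1`, is an algebra automorphism of `A`.
It therefore suffices to find a linear automorphism of `V` carrying `(B₀ ∩ V, B₁)` to
`(C₀ ∩ V, C₁)`, and one exists because the dimensions agree.
-/

open Submodule Module

namespace LinearEquiv

variable {R E F : Type*} [Ring R] [AddCommGroup E] [Module R E] [AddCommGroup F] [Module R F]
  {p q : Submodule R E} {p' q' : Submodule R F}

noncomputable def ofIsCompl (h : IsCompl p q) (h' : IsCompl p' q') (e₀ : p ≃ₗ[R] p')
    (e₁ : q ≃ₗ[R] q') : E ≃ₗ[R] F :=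
  (prodEquivOfIsCompl p q h).symm ≪≫ₗ e₀.prodCongr e₁ ≪≫ₗ prodEquivOfIsCompl p' q' h'

variable (h : IsCompl p q) (h' : IsCompl p' q') (e₀ : p ≃ₗ[R] p') (e₁ : q ≃ₗ[R] q')

theorem ofIsCompl_apply_left (x : p) : ofIsCompl h h' e₀ e₁ x = e₀ x := by
  simp [ofIsCompl]

theorem ofIsCompl_apply_right (x : q) : ofIsCompl h h' e₀ e₁ x = e₁ x := by
  simp [ofIsCompl]

theorem map_ofIsCompl_left : p.map (ofIsCompl h h' e₀ e₁ : E →ₗ[R] F) = p' := by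
  ext y
  refine ⟨?_, fun hy => ⟨e₀.symm ⟨y, hy⟩, coe_mem _, by simp [ofIsCompl_apply_left]⟩⟩
  rintro ⟨x, hx, rfl⟩
  exact ofIsCompl_apply_left h h' e₀ e₁ ⟨x, hx⟩ ▸ (e₀ ⟨x, hx⟩).2

theorem map_ofIsCompl_right : q.map (ofIsCompl h h' e₀ e₁ : E →ₗ[R] F) = q' := by
  ext y
  refine ⟨?_, fun hy => ⟨e₁.symm ⟨y, hy⟩, coe_mem _, by simp [ofIsCompl_apply_right]⟩⟩
  rintro ⟨x, hx, rfl⟩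
  exact ofIsCompl_apply_right h h' e₀ e₁ ⟨x, hx⟩ ▸ (e₁ ⟨x, hx⟩).2

end LinearEquiv

theorem Submodule.exists_linearEquiv_map_eq_of_isCompl {K M : Type*} [DivisionRing K]
    [AddCommGroup M] [Module K M] [FiniteDimensional K M] {P Q P' Q' : Submodule K M}
    (h : IsCompl P Q) (h' : IsCompl P' Q') (hP : finrank K P = finrank K P') :
    ∃ g : M ≃ₗ[K] M, P.map (g : M →ₗ[K] M) = P' ∧ Q.map (g : M →ₗ[K] M) = Q' := by
  have hQ : finrank K Q = finrank K Q' := by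
    have := finrank_add_eq_of_isCompl h
    have := finrank_add_eq_of_isCompl h'
    omega
  let g := LinearEquiv.ofIsCompl h h' (.ofFinrankEq _ _ hP) (.ofFinrankEq _ _ hQ)
  exact ⟨g, LinearEquiv.map_ofIsCompl_left .., LinearEquiv.map_ofIsCompl_right ..⟩

theorem Submodule.map_inf_eq_of_comp_subtype {R M : Type*} [Semiring R] [AddCommMonoid M]
    [Module R M] {V D E : Submodule R M} {f : M →ₗ[R] M} {g : V →ₗ[R] V}
    (hfg : f ∘ₗ V.subtype = V.subtype ∘ₗ g) (h : (D.comap V.subtype).map g = E.comap V.subtype) :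
    (V ⊓ D).map f = V ⊓ E := by
  rw [← map_comap_subtype, ← map_comap_subtype, ← map_comp, hfg, map_comp, h]

namespace SquareZero

variable {k A : Type*} [CommRing k] [Ring A] [Algebra k A] {V : Submodule k A}

theorem exists_eq_smul_one_add (hVc : Codisjoint (span k {(1 : A)}) V) (x : A) :
    ∃ a : k, ∃ v ∈ V, x = a • 1 + v := by
  obtain ⟨s, hs, v, hv, rfl⟩ := mem_sup.1 (hVc.eq_top ▸ mem_top : x ∈ span k {1} ⊔ V)
  obtain ⟨a, rfl⟩ := mem_span_singleton.1 hs
  exact ⟨a, v, hv, rfl⟩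

theorem smul_one_add_mul_smul_one_add (hV2 : ∀ x ∈ V, ∀ y ∈ V, x * y = 0) (a b : k)
    {v w : A} (hv : v ∈ V) (hw : w ∈ V) :
    (a • 1 + v) * (b • 1 + w) = (a * b) • 1 + (a • w + b • v) := by
  have := hV2 v hv w hw
  simp only [add_mul, mul_add, smul_mul_assoc, mul_smul_comm, one_mul, mul_one, this]
  module

theorem map_mul_of_map_one (hV2 : ∀ x ∈ V, ∀ y ∈ V, x * y = 0)
    (hVc : Codisjoint (span k {(1 : A)}) V) {f : A →ₗ[k] A} (hf1 : f 1 = 1)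
    (hfV : ∀ v ∈ V, f v ∈ V) (x y : A) : f (x * y) = f x * f y := by
  obtain ⟨a, v, hv, rfl⟩ := exists_eq_smul_one_add hVc x
  obtain ⟨b, w, hw, rfl⟩ := exists_eq_smul_one_add hVc y
  have hf : ∀ (c : k) (u : A), f (c • 1 + u) = c • 1 + f u := by simp [hf1]
  rw [smul_one_add_mul_smul_one_add hV2 a b hv hw, hf, hf, hf,
    smul_one_add_mul_smul_one_add hV2 a b (hfV v hv) (hfV w hw), map_add, map_smul, map_smul]

theorem exists_algEquiv_comp_subtype_eq (hV2 : ∀ x ∈ V, ∀ y ∈ V, x * y = 0)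
    (hVc : IsCompl (span k {(1 : A)}) V) (g : V ≃ₗ[k] V) :
    ∃ φ : A ≃ₐ[k] A, (φ : A →ₗ[k] A) ∘ₗ V.subtype = V.subtype ∘ₗ (g : V →ₗ[k] V) := by
  let f := LinearEquiv.ofIsCompl hVc hVc (.refl k _) g
  have hf1 : f 1 = 1 :=
    LinearEquiv.ofIsCompl_apply_left hVc hVc _ g ⟨1, mem_span_singleton_self 1⟩
  have hfV (v : V) : f v = g v := LinearEquiv.ofIsCompl_apply_right hVc hVc _ g v
  refine ⟨.ofLinearEquiv f hf1 (map_mul_of_map_one hV2 hVc.codisjoint hf1 fun v hv => ?_), ?_⟩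
  · exact hfV ⟨v, hv⟩ ▸ (g ⟨v, hv⟩).2
  · ext v
    exact hfV v

theorem span_one_sup_inf_eq (hVc : Codisjoint (span k {(1 : A)}) V) {D : Submodule k A}
    (h1 : (1 : A) ∈ D) : span k {1} ⊔ V ⊓ D = D := by
  rw [← sup_inf_assoc_of_le V ((span_singleton_le_iff_mem _ _).2 h1), hVc.eq_top, top_inf_eq]

theorem le_of_disjoint_of_mul_self_mem {k : Type*} [Field k] [Algebra k A] {V : Submodule k A}
    (hchar : (2 : k) ≠ 0) (hV2 : ∀ x ∈ V, ∀ y ∈ V, x * y = 0)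
    (hVc : Codisjoint (span k {(1 : A)}) V) {D₀ D₁ : Submodule k A} (hD : Disjoint D₀ D₁)
    (h1 : (1 : A) ∈ D₀) (hsq : ∀ x ∈ D₁, x * x ∈ D₀) : D₁ ≤ V := by
  intro x hx
  obtain ⟨a, v, hv, rfl⟩ := exists_eq_smul_one_add hVc x
  have hx2 : (2 * a) • (a • 1 + v) = (a • 1 + v) * (a • 1 + v) + (a * a) • (1 : A) := by
    rw [smul_one_add_mul_smul_one_add hV2 a a hv hv]
    module
  have hx0 : (2 * a) • (a • 1 + v) = 0 :=
    disjoint_def.1 hD _ (hx2 ▸ add_mem (hsq _ hx) (smul_mem _ _ h1)) (smul_mem _ _ hx)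
  rcases smul_eq_zero.1 hx0 with ha | hx0
  · rwa [(mul_eq_zero.1 ha).resolve_left hchar, zero_smul, zero_add]
  · exact hx0 ▸ zero_mem V

end SquareZero

theorem stmt6_general (k A : Type*) [Field k] (hchar : (2 : k) ≠ 0)
    [CommRing A] [Algebra k A] [FiniteDimensional k A]
    (V : Submodule k A) (hV2 : ∀ x ∈ V, ∀ y ∈ V, x * y = 0)
    (hVc : IsCompl (Submodule.span k {(1 : A)}) V)
    (B₀ B₁ : Submodule k A) (hBc : IsCompl B₀ B₁) (hB1 : (1 : A) ∈ B₀)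
    (hB11 : ∀ x ∈ B₁, ∀ y ∈ B₁, x * y ∈ B₀)
    (C₀ C₁ : Submodule k A) (hCc : IsCompl C₀ C₁) (hC1 : (1 : A) ∈ C₀)
    (hC11 : ∀ x ∈ C₁, ∀ y ∈ C₁, x * y ∈ C₀)
    (hdim : Module.finrank k B₀ = Module.finrank k C₀) :
    ∃ φ : A ≃ₐ[k] A,
      Submodule.map (φ : A →ₗ[k] A) B₀ = C₀ ∧
      Submodule.map (φ : A →ₗ[k] A) B₁ = C₁ := by
  have hB₁V : B₁ ≤ V := SquareZero.le_of_disjoint_of_mul_self_mem hchar hV2 hVc.codisjoint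
    hBc.disjoint hB1 fun x hx => hB11 x hx x hx
  have hC₁V : C₁ ≤ V := SquareZero.le_of_disjoint_of_mul_self_mem hchar hV2 hVc.codisjoint
    hCc.disjoint hC1 fun x hx => hC11 x hx x hx
  have hrank : finrank k (B₁.comap V.subtype) = finrank k (C₁.comap V.subtype) := by
    rw [(comapSubtypeEquivOfLe hB₁V).finrank_eq, (comapSubtypeEquivOfLe hC₁V).finrank_eq]
    have := finrank_add_eq_of_isCompl hBc
    have := finrank_add_eq_of_isCompl hCc
    omega
  obtain ⟨g, hg₁, hg₀⟩ := exists_linearEquiv_map_eq_of_isCompl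
    (isCompl_comap_subtype_of_isCompl_of_le hBc.symm hB₁V)
    (isCompl_comap_subtype_of_isCompl_of_le hCc.symm hC₁V) hrank
  obtain ⟨φ, hφ⟩ := SquareZero.exists_algEquiv_comp_subtype_eq hV2 hVc g
  refine ⟨φ, ?_, ?_⟩
  · rw [← SquareZero.span_one_sup_inf_eq hVc.codisjoint hB1,
      ← SquareZero.span_one_sup_inf_eq hVc.codisjoint hC1,
      Submodule.map_sup, map_inf_eq_of_comp_subtype hφ hg₀, map_span, Set.image_singleton,
      AlgEquiv.toLinearMap_apply, map_one]
  · rw [← inf_eq_right.2 hB₁V, ← inf_eq_right.2 hC₁V, map_inf_eq_of_comp_subtype hφ hg₁]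

/-- Any two Z₂-gradings on C_n = k ⊕ V (with V² = 0) whose even parts have the same
dimension are isomorphic as superalgebras. -/
theorem stmt6 (k A : Type*) [Field k] (hchar : (2 : k) ≠ 0)
    [CommRing A] [Algebra k A] [FiniteDimensional k A]
    (V : Submodule k A) (hV2 : ∀ x ∈ V, ∀ y ∈ V, x * y = 0)
    (hVc : IsCompl (Submodule.span k {(1 : A)}) V)
    (B₀ B₁ : Submodule k A) (hBc : IsCompl B₀ B₁) (hB1 : (1 : A) ∈ B₀)
    (hB00 : ∀ x ∈ B₀, ∀ y ∈ B₀, x * y ∈ B₀)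
    (hB01 : ∀ x ∈ B₀, ∀ y ∈ B₁, x * y ∈ B₁)
    (hB11 : ∀ x ∈ B₁, ∀ y ∈ B₁, x * y ∈ B₀)
    (C₀ C₁ : Submodule k A) (hCc : IsCompl C₀ C₁) (hC1 : (1 : A) ∈ C₀)
    (hC00 : ∀ x ∈ C₀, ∀ y ∈ C₀, x * y ∈ C₀)
    (hC01 : ∀ x ∈ C₀, ∀ y ∈ C₁, x * y ∈ C₁)
    (hC11 : ∀ x ∈ C₁, ∀ y ∈ C₁, x * y ∈ C₀)
    (hdim : Module.finrank k B₀ = Module.finrank k C₀) :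
    ∃ φ : A ≃ₐ[k] A,
      Submodule.map (φ : A →ₗ[k] A) B₀ = C₀ ∧
      Submodule.map (φ : A →ₗ[k] A) B₁ = C₁ :=
  stmt6_general k A hchar V hV2 hVc B₀ B₁ hBc hB1 hB11 C₀ C₁ hCc hC1 hC11 hdim
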